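/- Let A and B be n×n complex positive semidefinite matrices and let 1 ≤ k ≤ n. Then ∏_{t=1}^k λ_t(A + B) ≥ ∏_{t=1}^k λ_t(A) + ∏_{t=1}^k λ_{n−t+1}(B) + (2^k − 2) · ∏_{t=1}^k (λ_t(A) · λ_{n−t+1}(B))^{1/2}. -/

import Mathlib

open Matrix
open scoped ComplexOrder

/-- The `t`-th largest eigenvalue (0-indexed) of a Hermitian matrix
(junk value `0` if the matrix is not Hermitian). -/
noncomputable def eigval {n : ℕ} (A : Matrix (Fin n) (Fin n) ℂ) (t : Fin n) : ℝ :=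
  if h : A.IsHermitian then h.eigenvalues (Tuple.sort h.eigenvalues t.rev) else 0

/-- The `t`-th largest singular value (0-indexed) of a square complex matrix. -/
noncomputable def singval {n : ℕ} (X : Matrix (Fin n) (Fin n) ℂ) (t : Fin n) : ℝ :=
  Real.sqrt (eigval (Xᴴ * X) t)

/-! Let `U` be the isometry onto the top `k` eigenvectors of `A`, so that `X = Uᴴ A U` is
diagonal with entries `λ₁(A), …, λₖ(A)`, and let `Y = Uᴴ B U`. Cauchy interlacing (proved by the
Courant–Fischer dimension count) gives `det (X + Y) ≤ ∏ λₜ(A + B)` and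
`det Y ≥ ∏ λₙ₋ₜ₊₁(B)`. Writing `X + Y = X^{1/2} (1 + Z) X^{1/2}` with `Z ≥ 0` and eigenvalues `ζᵢ`,
the bound `det (X + Y) ≥ det X + det Y + (2ᵏ - 2) √(det X det Y)` becomes
`∏ (1 + ζᵢ) ≥ 1 + ∏ ζᵢ + (2ᵏ - 2) ∏ √ζᵢ`, an elementary inequality proved by induction on `k`. -/

theorem Finset.le_prod_sq_add_sq {ι : Type*} {s : Finset ι} (hs : s.Nonempty) {x y : ι → ℝ}
    (hx : ∀ i ∈ s, 0 ≤ x i) (hy : ∀ i ∈ s, 0 ≤ y i) :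
    ∏ i ∈ s, x i ^ 2 + ∏ i ∈ s, y i ^ 2 + (2 ^ s.card - 2) * ∏ i ∈ s, x i * y i ≤
      ∏ i ∈ s, (x i ^ 2 + y i ^ 2) := by
  induction hs using Finset.Nonempty.cons_induction with
  | singleton i => simp
  | cons i s hi hs ih =>
    simp only [Finset.mem_cons, forall_eq_or_imp] at hx hy
    have ih := ih hx.2 hy.2
    simp only [Finset.prod_mul_distrib, Finset.prod_pow] at ih
    simp only [Finset.prod_cons, Finset.card_cons, Finset.prod_mul_distrib, Finset.prod_pow]
    rw [pow_succ (2 : ℝ) s.card]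
    have hX : 0 ≤ ∏ j ∈ s, x j := Finset.prod_nonneg hx.2
    have hY : 0 ≤ ∏ j ∈ s, y j := Finset.prod_nonneg hy.2
    have h2 : (2 : ℝ) ≤ 2 ^ s.card := le_self_pow₀ one_le_two hs.card_pos.ne'
    -- with `X = ∏ x`, `Y = ∏ y`, the gap is `(x Y - y X)² + (2 ^ #s - 2) (x - y)² X Y`
    nlinarith [sq_nonneg (x i * ∏ j ∈ s, y j - y i * ∏ j ∈ s, x j),
      mul_nonneg (mul_nonneg (sq_nonneg (x i - y i)) (mul_nonneg hX hY)) (sub_nonneg.2 h2),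
      mul_le_mul_of_nonneg_left ih (add_nonneg (sq_nonneg (x i)) (sq_nonneg (y i)))]

namespace Matrix

theorem exists_mulVec_eq_zero_of_card_lt {ι κ K : Type*} [Fintype ι] [Fintype κ] [Field K]
    (H : Matrix κ ι K) (h : Fintype.card κ < Fintype.card ι) : ∃ y ≠ 0, H *ᵥ y = 0 := by
  have hker := LinearMap.ker_ne_bot_of_finrank_lt (f := H.mulVecLin) (by simpa using h)
  obtain ⟨y, hy, hy0⟩ := (Submodule.ne_bot_iff _).mp hker
  exact ⟨y, hy0, hy⟩

theorem star_mulVec_dotProduct_mulVec {m ι : Type*} [Fintype m] [Fintype ι] (F : Matrix m ι ℂ)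
    (M : Matrix m m ℂ) (y : ι → ℂ) :
    star (F *ᵥ y) ⬝ᵥ M *ᵥ (F *ᵥ y) = star y ⬝ᵥ (Fᴴ * M * F) *ᵥ y := by
  rw [star_mulVec, ← dotProduct_mulVec, mulVec_mulVec, mulVec_mulVec]

theorem star_dotProduct_diagonal_mulVec {ι : Type*} [Fintype ι] [DecidableEq ι] (d : ι → ℝ)
    (y : ι → ℂ) :
    star y ⬝ᵥ diagonal (fun i ↦ (d i : ℂ)) *ᵥ y = ((∑ i, d i * Complex.normSq (y i) : ℝ) : ℂ) := by
  simp only [dotProduct, mulVec_diagonal, Pi.star_apply, Complex.star_def]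
  push_cast
  refine Finset.sum_congr rfl fun i _ ↦ ?_
  rw [Complex.normSq_eq_conj_mul_self]
  ring

theorem star_mulVec_dotProduct_mulVec_of_conj_eq_diagonal {m ι : Type*} [Fintype m] [Fintype ι]
    [DecidableEq ι] {F : Matrix m ι ℂ} {M : Matrix m m ℂ} {d : ι → ℝ}
    (h : Fᴴ * M * F = diagonal fun i ↦ (d i : ℂ)) (y : ι → ℂ) :
    star (F *ᵥ y) ⬝ᵥ M *ᵥ (F *ᵥ y) = ((∑ i, d i * Complex.normSq (y i) : ℝ) : ℂ) := by
  rw [star_mulVec_dotProduct_mulVec, h, star_dotProduct_diagonal_mulVec]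

theorem star_mulVec_dotProduct_mulVec_of_isometry {m ι : Type*} [Fintype m] [Fintype ι]
    [DecidableEq ι] {F : Matrix m ι ℂ} (hF : Fᴴ * F = 1) (y : ι → ℂ) :
    star (F *ᵥ y) ⬝ᵥ F *ᵥ y = ((∑ i, Complex.normSq (y i) : ℝ) : ℂ) := by
  classical
  have h1 : Fᴴ * (1 : Matrix m m ℂ) * F = diagonal fun _ ↦ ((1 : ℝ) : ℂ) := by
    rw [Matrix.mul_one, hF, Complex.ofReal_one, diagonal_one]
  simpa only [one_mulVec, one_mul] using star_mulVec_dotProduct_mulVec_of_conj_eq_diagonal h1 y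

theorem conjTranspose_submatrix_mul_mul_submatrix {m l ι : Type*} [Fintype m]
    (W : Matrix m l ℂ) (N : Matrix m m ℂ) (e : ι → l) :
    (W.submatrix id e)ᴴ * N * W.submatrix id e = (Wᴴ * N * W).submatrix e e := by
  ext i j
  simp only [mul_apply, submatrix_apply, conjTranspose_apply, id_eq]

theorem exists_isometry_conj_eq_diagonal {m l ι : Type*} [Fintype m] [Fintype l] [DecidableEq l]
    [DecidableEq ι] {U : Matrix m l ℂ} (hU : Uᴴ * U = 1) {W : Matrix l l ℂ}
    (hW : W ∈ unitaryGroup l ℂ) {M : Matrix m m ℂ} {ν : l → ℝ}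
    (hWM : Wᴴ * (Uᴴ * M * U) * W = diagonal fun i ↦ (ν i : ℂ)) {e : ι → l}
    (he : Function.Injective e) :
    ∃ F : Matrix m ι ℂ, Fᴴ * F = 1 ∧ Fᴴ * M * F = diagonal fun j ↦ (ν (e j) : ℂ) := by
  classical
  have hconj (N : Matrix m m ℂ) : (U * W.submatrix id e)ᴴ * N * (U * W.submatrix id e) =
      (Wᴴ * (Uᴴ * N * U) * W).submatrix e e := by
    rw [← conjTranspose_submatrix_mul_mul_submatrix]
    simp only [conjTranspose_mul, Matrix.mul_assoc]
  refine ⟨U * W.submatrix id e, ?_, ?_⟩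
  · have h1 := hconj 1
    rwa [Matrix.mul_one, Matrix.mul_one, hU, Matrix.mul_one, ← star_eq_conjTranspose,
      mem_unitaryGroup_iff'.mp hW, submatrix_one _ he] at h1
  · rw [hconj, hWM, submatrix_diagonal _ _ he]
    rfl

theorem conj_neg_eq_diagonal {m ι : Type*} [Fintype m] [DecidableEq ι] {G : Matrix m ι ℂ}
    {X : Matrix m m ℂ} {d : ι → ℝ} (h : Gᴴ * X * G = diagonal fun i ↦ (d i : ℂ)) :
    Gᴴ * (-X) * G = diagonal fun i ↦ ((-d i : ℝ) : ℂ) := by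
  simp [Matrix.mul_neg, Matrix.neg_mul, h]

/-- A nonzero vector in the range of `F` whose coordinates along the columns `g` of `V` vanish
exists by counting dimensions; its Rayleigh quotient is both `≥ a` and `≤ b`. -/
theorem le_of_conj_eq_diagonal {m ι κ : Type*} [Fintype m] [DecidableEq m] [Fintype ι]
    [DecidableEq ι] [Fintype κ] (hcard : Fintype.card κ < Fintype.card ι) {M : Matrix m m ℂ}
    {F : Matrix m ι ℂ} {ν : ι → ℝ} (hF : Fᴴ * F = 1)
    (hFM : Fᴴ * M * F = diagonal fun j ↦ (ν j : ℂ))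
    {V : Matrix m m ℂ} {μ : m → ℝ} (hV : V ∈ unitaryGroup m ℂ)
    (hVM : Vᴴ * M * V = diagonal fun i ↦ (μ i : ℂ))
    (g : κ → m) {a b : ℝ} (ha : ∀ j, a ≤ ν j) (hb : ∀ i ∉ Set.range g, μ i ≤ b) : a ≤ b := by
  obtain ⟨y, hy0, hy⟩ := exists_mulVec_eq_zero_of_card_lt ((Vᴴ).submatrix g id * F) hcard
  set z := Vᴴ *ᵥ (F *ᵥ y)
  have hz : ∀ s, z (g s) = 0 := fun s ↦ by
    rw [show z = (Vᴴ * F) *ᵥ y from mulVec_mulVec _ _ _]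
    exact congrFun hy s
  have hVz : V *ᵥ z = F *ᵥ y := by
    rw [mulVec_mulVec, ← star_eq_conjTranspose, mem_unitaryGroup_iff.mp hV, one_mulVec]
  have hnorm : ∑ j, Complex.normSq (y j) = ∑ i, Complex.normSq (z i) := by
    apply Complex.ofReal_injective
    rw [← star_mulVec_dotProduct_mulVec_of_isometry hF, ← hVz,
      star_mulVec_dotProduct_mulVec_of_isometry (mem_unitaryGroup_iff'.mp hV)]
  have hquad : ∑ j, ν j * Complex.normSq (y j) = ∑ i, μ i * Complex.normSq (z i) := by
    apply Complex.ofReal_injective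
    rw [← star_mulVec_dotProduct_mulVec_of_conj_eq_diagonal hFM, ← hVz,
      star_mulVec_dotProduct_mulVec_of_conj_eq_diagonal hVM]
  have hpos : 0 < ∑ j, Complex.normSq (y j) := by
    obtain ⟨j, hj⟩ := Function.ne_iff.mp hy0
    exact Finset.sum_pos' (fun j _ ↦ Complex.normSq_nonneg _)
      ⟨j, Finset.mem_univ j, Complex.normSq_pos.mpr hj⟩
  refine le_of_mul_le_mul_right ?_ hpos
  calc a * ∑ j, Complex.normSq (y j)
      ≤ ∑ j, ν j * Complex.normSq (y j) := by
        rw [Finset.mul_sum]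
        exact Finset.sum_le_sum fun j _ ↦
          mul_le_mul_of_nonneg_right (ha j) (Complex.normSq_nonneg _)
    _ = ∑ i, μ i * Complex.normSq (z i) := hquad
    _ ≤ b * ∑ j, Complex.normSq (y j) := by
        rw [hnorm, Finset.mul_sum]
        refine Finset.sum_le_sum fun i _ ↦ ?_
        by_cases hi : i ∈ Set.range g
        · obtain ⟨s, rfl⟩ := hi
          simp [hz s]
        · exact mul_le_mul_of_nonneg_right (hb i hi) (Complex.normSq_nonneg _)

theorem ge_of_conj_eq_diagonal {m ι κ : Type*} [Fintype m] [DecidableEq m] [Fintype ι]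
    [DecidableEq ι] [Fintype κ] (hcard : Fintype.card κ < Fintype.card ι) {M : Matrix m m ℂ}
    {F : Matrix m ι ℂ} {ν : ι → ℝ} (hF : Fᴴ * F = 1)
    (hFM : Fᴴ * M * F = diagonal fun j ↦ (ν j : ℂ))
    {V : Matrix m m ℂ} {μ : m → ℝ} (hV : V ∈ unitaryGroup m ℂ)
    (hVM : Vᴴ * M * V = diagonal fun i ↦ (μ i : ℂ))
    (g : κ → m) {a b : ℝ} (ha : ∀ j, ν j ≤ a) (hb : ∀ i ∉ Set.range g, b ≤ μ i) : b ≤ a :=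
  neg_le_neg_iff.mp <| le_of_conj_eq_diagonal hcard hF (conj_neg_eq_diagonal hFM) hV
    (conj_neg_eq_diagonal hVM) g (fun j ↦ neg_le_neg (ha j)) fun i hi ↦ neg_le_neg (hb i hi)

theorem IsHermitian.conjTranspose_eigenvectorUnitary_mul_mul {ι : Type*} [Fintype ι]
    [DecidableEq ι] {A : Matrix ι ι ℂ} (hA : A.IsHermitian) :
    (hA.eigenvectorUnitary : Matrix ι ι ℂ)ᴴ * A * hA.eigenvectorUnitary =
      diagonal fun i ↦ (hA.eigenvalues i : ℂ) := by
  simpa [star_eq_conjTranspose, Function.comp_def] using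
    hA.conjStarAlgAut_star_eigenvectorUnitary

section

variable {ι : Type*} [Fintype ι] [DecidableEq ι]

theorem IsHermitian.det_cfc {A : Matrix ι ι ℂ} (hA : A.IsHermitian) (f : ℝ → ℝ) :
    (cfc f A).det = ∏ i, (f (hA.eigenvalues i) : ℂ) := by
  rw [hA.cfc_eq]
  simp [IsHermitian.cfc, -Unitary.conjStarAlgAut_apply]

open scoped MatrixOrder in
theorem PosSemidef.exists_det_add_eq {X Y : Matrix ι ι ℂ} (hX : X.PosSemidef)
    (hY : Y.PosSemidef) (hdet : X.det ≠ 0) :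
    ∃ ζ : ι → ℝ, (∀ i, 0 ≤ ζ i) ∧ Y.det = X.det * ((∏ i, ζ i : ℝ) : ℂ) ∧
      (X + Y).det = X.det * ((∏ i, (1 + ζ i) : ℝ) : ℂ) := by
  set R := CFC.sqrt X
  have hRR : R * R = X := CFC.sqrt_mul_sqrt_self X hX.nonneg
  have hRH : Rᴴ = R := (CFC.sqrt_nonneg X).posSemidef.1
  have hRdet : IsUnit R.det := by
    rw [isUnit_iff_ne_zero]
    rintro h
    exact hdet (by rw [← hRR, det_mul, h, zero_mul])
  set Z := R⁻¹ * Y * R⁻¹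
  have hZ : Z.PosSemidef := by
    simpa [conjTranspose_nonsing_inv, hRH] using hY.conjTranspose_mul_mul_same R⁻¹
  have hRZR : R * Z * R = Y := by
    simp only [Z, ← Matrix.mul_assoc, mul_nonsing_inv _ hRdet, Matrix.one_mul]
    rw [Matrix.mul_assoc, nonsing_inv_mul _ hRdet, Matrix.mul_one]
  have hXY : X + Y = R * cfc (fun x : ℝ ↦ 1 + x) Z * R := by
    rw [cfc_const_add (1 : ℝ) (fun x ↦ x) Z, cfc_id' ℝ Z, Algebra.algebraMap_eq_smul_one,
      one_smul, Matrix.mul_add, Matrix.add_mul, Matrix.mul_one, hRR, hRZR]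
  have hZH : Z.IsHermitian := hZ.1
  refine ⟨hZH.eigenvalues, hZ.eigenvalues_nonneg, ?_, ?_⟩
  · rw [← hRZR, det_mul, det_mul, hZH.det_eq_prod_eigenvalues, ← hRR, det_mul,
      RCLike.ofReal_eq_complex_ofReal]
    push_cast
    ring
  · rw [hXY, det_mul, det_mul, hZH.det_cfc, ← hRR, det_mul]
    push_cast
    ring

theorem PosSemidef.le_re_det_add [Nonempty ι] {X Y : Matrix ι ι ℂ} (hX : X.PosSemidef)
    (hY : Y.PosSemidef) :
    X.det.re + Y.det.re + (2 ^ Fintype.card ι - 2) * √(X.det.re * Y.det.re) ≤ (X + Y).det.re := by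
  wlog hXdet : X.det ≠ 0 generalizing X Y
  · by_cases hYdet : Y.det = 0
    · rw [not_not.mp hXdet, hYdet]
      simpa using (Complex.nonneg_iff.mp (hX.add hY).det_nonneg).1
    · simpa only [add_comm, mul_comm] using this hY hX hYdet
  obtain ⟨ζ, hζ, hYdet, hXYdet⟩ := hX.exists_det_add_eq hY hXdet
  have hx : 0 ≤ X.det.re := (Complex.nonneg_iff.mp hX.det_nonneg).1
  have hscalar := Finset.le_prod_sq_add_sq Finset.univ_nonempty (x := 1) (y := fun i ↦ √(ζ i))
    (fun _ _ ↦ zero_le_one) fun _ _ ↦ Real.sqrt_nonneg _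
  simp only [Pi.one_apply, one_pow, Finset.prod_const_one, one_mul, Real.sq_sqrt (hζ _),
    Finset.card_univ] at hscalar
  have hsqrt : √(X.det.re * (X.det.re * ∏ i, ζ i)) = X.det.re * ∏ i, √(ζ i) := by
    rw [← mul_assoc, Real.sqrt_mul (mul_self_nonneg _), Real.sqrt_mul_self hx,
      Real.sqrt_prod _ fun i _ ↦ hζ i]
  rw [hYdet, hXYdet, Complex.re_mul_ofReal, Complex.re_mul_ofReal, hsqrt]
  linear_combination mul_le_mul_of_nonneg_left hscalar hx

end

end Matrix

section

variable {n k : ℕ} {M : Matrix (Fin n) (Fin n) ℂ} {U : Matrix (Fin n) (Fin k) ℂ}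

/-- `Matrix.IsHermitian.eigenvalues` lists the eigenvalues in no particular order;
`eigvalIndex hM t` is the position of the `t`-th largest one. -/
noncomputable def eigvalIndex (hM : M.IsHermitian) : Equiv.Perm (Fin n) :=
  Fin.revPerm.trans (Tuple.sort hM.eigenvalues)

theorem eigval_eq_eigenvalues (hM : M.IsHermitian) (t : Fin n) :
    eigval M t = hM.eigenvalues (eigvalIndex hM t) :=
  dif_pos hM

theorem eigval_antitone (hM : M.IsHermitian) : Antitone (eigval M) := fun i j hij ↦ by
  simp only [eigval_eq_eigenvalues hM, eigvalIndex, Equiv.trans_apply]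
  exact Tuple.monotone_sort hM.eigenvalues (Fin.rev_le_rev.mpr hij)

theorem eigval_nonneg (hM : M.PosSemidef) (t : Fin n) : 0 ≤ eigval M t := by
  rw [eigval_eq_eigenvalues hM.1]
  exact hM.eigenvalues_nonneg _

theorem re_det_eq_prod_eigval (hM : M.IsHermitian) : M.det.re = ∏ t, eigval M t := by
  rw [hM.det_eq_prod_eigenvalues, RCLike.ofReal_eq_complex_ofReal, ← Complex.ofReal_prod,
    Complex.ofReal_re]
  simp_rw [eigval_eq_eigenvalues hM]
  exact (Equiv.prod_comp (eigvalIndex hM) hM.eigenvalues).symm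

theorem eigval_compression_le (hM : M.IsHermitian) (hU : Uᴴ * U = 1) (hkn : k ≤ n) (t : Fin k) :
    eigval (Uᴴ * M * U) t ≤ eigval M (Fin.castLE hkn t) := by
  have hC := isHermitian_conjTranspose_mul_mul U hM
  obtain ⟨F, hF, hFM⟩ := exists_isometry_conj_eq_diagonal hU hC.eigenvectorUnitary.2
    hC.conjTranspose_eigenvectorUnitary_mul_mul (e := fun j : Set.Iic t ↦ eigvalIndex hC j)
    ((eigvalIndex hC).injective.comp Subtype.val_injective)
  refine le_of_conj_eq_diagonal (κ := Set.Iio (Fin.castLE hkn t)) (by simp) hF hFM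
    hM.eigenvectorUnitary.2 hM.conjTranspose_eigenvectorUnitary_mul_mul
    (fun s ↦ eigvalIndex hM s) (fun j ↦ ?_) fun i hi ↦ ?_
  · rw [← eigval_eq_eigenvalues]
    exact eigval_antitone hC j.2
  · have hr : Fin.castLE hkn t ≤ (eigvalIndex hM).symm i :=
      not_lt.mp fun h ↦ hi ⟨⟨_, h⟩, by simp⟩
    simpa [eigval_eq_eigenvalues hM] using eigval_antitone hM hr

theorem eigval_le_eigval_compression (hM : M.IsHermitian) (hU : Uᴴ * U = 1) (hkn : k ≤ n)
    (t : Fin k) : eigval M (Fin.castLE hkn t).rev ≤ eigval (Uᴴ * M * U) t.rev := by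
  have hC := isHermitian_conjTranspose_mul_mul U hM
  obtain ⟨F, hF, hFM⟩ := exists_isometry_conj_eq_diagonal hU hC.eigenvectorUnitary.2
    hC.conjTranspose_eigenvectorUnitary_mul_mul (e := fun j : Set.Ici t.rev ↦ eigvalIndex hC j)
    ((eigvalIndex hC).injective.comp Subtype.val_injective)
  refine ge_of_conj_eq_diagonal (κ := Set.Ioi (Fin.castLE hkn t).rev) (by simp; omega) hF hFM
    hM.eigenvectorUnitary.2 hM.conjTranspose_eigenvectorUnitary_mul_mul
    (fun s ↦ eigvalIndex hM s) (fun j ↦ ?_) fun i hi ↦ ?_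
  · rw [← eigval_eq_eigenvalues]
    exact eigval_antitone hC j.2
  · have hr : (eigvalIndex hM).symm i ≤ (Fin.castLE hkn t).rev :=
      not_lt.mp fun h ↦ hi ⟨⟨_, h⟩, by simp⟩
    simpa [eigval_eq_eigenvalues hM] using eigval_antitone hM hr

theorem re_det_compression_le (hM : M.PosSemidef) (hU : Uᴴ * U = 1) (hkn : k ≤ n) :
    (Uᴴ * M * U).det.re ≤ ∏ t : Fin k, eigval M (Fin.castLE hkn t) := by
  rw [re_det_eq_prod_eigval (isHermitian_conjTranspose_mul_mul U hM.1)]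
  exact Finset.prod_le_prod (fun t _ ↦ eigval_nonneg (hM.conjTranspose_mul_mul_same U) t)
    fun t _ ↦ eigval_compression_le hM.1 hU hkn t

theorem prod_eigval_le_re_det_compression (hM : M.PosSemidef) (hU : Uᴴ * U = 1) (hkn : k ≤ n) :
    ∏ t : Fin k, eigval M (Fin.castLE hkn t).rev ≤ (Uᴴ * M * U).det.re := by
  rw [re_det_eq_prod_eigval (isHermitian_conjTranspose_mul_mul U hM.1),
    ← Fintype.prod_equiv Fin.revPerm (fun t ↦ eigval (Uᴴ * M * U) t.rev) _ fun _ ↦ rfl]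
  exact Finset.prod_le_prod (fun t _ ↦ eigval_nonneg hM _)
    fun t _ ↦ eigval_le_eigval_compression hM.1 hU hkn t

end

theorem prod_largest_eig_add_ge_general (n k : ℕ) (hk : 0 < k) (hkn : k ≤ n)
    (A B : Matrix (Fin n) (Fin n) ℂ) (hA : A.PosSemidef) (hB : B.PosSemidef) :
    ∏ t : Fin k, eigval (A + B) (Fin.castLE hkn t) ≥
      ∏ t : Fin k, eigval A (Fin.castLE hkn t) +
        ∏ t : Fin k, eigval B ((Fin.castLE hkn t).rev) +
        ((2 : ℝ) ^ k - 2) *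
          ∏ t : Fin k, Real.sqrt (eigval A (Fin.castLE hkn t) *
            eigval B ((Fin.castLE hkn t).rev)) := by
  have : Nonempty (Fin k) := ⟨⟨0, hk⟩⟩
  obtain ⟨U, hU, hUA⟩ : ∃ U : Matrix (Fin n) (Fin k) ℂ, Uᴴ * U = 1 ∧
      Uᴴ * A * U = diagonal fun t ↦ (eigval A (Fin.castLE hkn t) : ℂ) := by
    simp_rw [eigval_eq_eigenvalues hA.1]
    exact exists_isometry_conj_eq_diagonal (U := 1) (by simp) hA.1.eigenvectorUnitary.2
      (by simpa using hA.1.conjTranspose_eigenvectorUnitary_mul_mul)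
      ((eigvalIndex hA.1).injective.comp (Fin.castLE_injective hkn))
  have hX : (Uᴴ * A * U).det.re = ∏ t, eigval A (Fin.castLE hkn t) := by
    rw [hUA, det_diagonal, ← Complex.ofReal_prod, Complex.ofReal_re]
  have hdet := (hA.conjTranspose_mul_mul_same U).le_re_det_add (hB.conjTranspose_mul_mul_same U)
  rw [← Matrix.add_mul, ← Matrix.mul_add, hX, Fintype.card_fin] at hdet
  have hc : (0 : ℝ) ≤ 2 ^ k - 2 := by
    simpa using pow_le_pow_right₀ one_le_two (Nat.one_le_iff_ne_zero.mpr hk.ne')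
  have hPA : 0 ≤ ∏ t, eigval A (Fin.castLE hkn t) :=
    Finset.prod_nonneg fun t _ ↦ eigval_nonneg hA _
  have hY := prod_eigval_le_re_det_compression hB hU hkn
  rw [ge_iff_le, ← Real.sqrt_prod _ fun t _ ↦ mul_nonneg (eigval_nonneg hA _) (eigval_nonneg hB _),
    Finset.prod_mul_distrib]
  calc _ ≤ _ := by gcongr
    _ ≤ _ := hdet
    _ ≤ _ := re_det_compression_le (hA.add hB) hU hkn

theorem prod_largest_eig_add_ge (n k : ℕ) (hn : 0 < n) (hk : 0 < k) (hkn : k ≤ n)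
    (A B : Matrix (Fin n) (Fin n) ℂ) (hA : A.PosSemidef) (hB : B.PosSemidef) :
    ∏ t : Fin k, eigval (A + B) (Fin.castLE hkn t) ≥
      ∏ t : Fin k, eigval A (Fin.castLE hkn t) +
        ∏ t : Fin k, eigval B ((Fin.castLE hkn t).rev) +
        ((2 : ℝ) ^ k - 2) *
          ∏ t : Fin k, Real.sqrt (eigval A (Fin.castLE hkn t) *
            eigval B ((Fin.castLE hkn t).rev)) :=
  prod_largest_eig_add_ge_general n k hk hkn A B hA hB
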